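/- arXiv:2605.04817 — 5 statements merged into one kernel-verified Lean document; each statement's English description precedes it below -/
import Mathlib

section
/- In the ring of formal power series ℚ[[x]], the logarithm of the even power series (e^{x/2} - e^{-x/2})/x = Σ_{s≥0} x^{2s}/(4^s (2s+1)!) equals Σ_{s≥1} (B_{2s}/(2s)) · x^{2s}/(2s)!, where B_{2s} is the 2s-th Bernoulli number. In other words, the coefficients α_{2s} defined by log((e^{x/2}-e^{-x/2})/x) = Σ_{s≥1} α_{2s} x^{2s}/(2s)! satisfy α_{2s} = B_{2s}/(2s). -/
open PowerSeries

/-- The power series `(e^{x/2} - e^{-x/2})/x = Σ_{s≥0} x^{2s}/(4^s (2s+1)!)`. -/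
noncomputable def shSeries : PowerSeries ℚ :=
  PowerSeries.mk fun n => if Even n then ((4 : ℚ) ^ (n / 2) * (n + 1).factorial)⁻¹ else 0

/-- The claimed logarithm `Σ_{s≥1} (B_{2s}/(2s)) x^{2s}/(2s)!`, i.e. the coefficient of
`x^n` for even `n ≠ 0` is `B_n / (n · n!)`. -/
noncomputable def logShSeries : PowerSeries ℚ :=
  PowerSeries.mk fun n =>
    if Even n ∧ n ≠ 0 then bernoulli n / ((n : ℚ) * n.factorial) else 0

noncomputable def aS : PowerSeries ℚ := rescale (1/2 : ℚ) (exp ℚ)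
noncomputable def bS : PowerSeries ℚ := rescale (-(1/2) : ℚ) (exp ℚ)

lemma aS_mul_aS : aS * aS = exp ℚ := by
  have h2 : exp ℚ * exp ℚ = rescale (2 : ℚ) (exp ℚ) := by
    have := exp_pow_eq_rescale_exp (A := ℚ) 2
    simpa [pow_two] using this
  have : rescale (1/2 : ℚ) (exp ℚ * exp ℚ) = exp ℚ := by
    rw [h2, rescale_rescale]
    norm_num [rescale_one]
  rw [← this, map_mul, aS]

lemma aS_mul_bS : aS * bS = 1 := by
  have h := exp_mul_exp_neg_eq_one (A := ℚ)
  have : rescale (1/2 : ℚ) (exp ℚ * evalNegHom (exp ℚ)) = 1 := by rw [h, map_one]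
  rw [map_mul] at this
  rw [aS, bS, ← this]
  congr 1
  rw [evalNegHom, rescale_rescale]
  norm_num

lemma coeff_aS (n : ℕ) : coeff n aS = (1/2 : ℚ)^n / n.factorial := by
  simp [aS, coeff_rescale, coeff_exp, mul_div_assoc, div_eq_mul_inv]

lemma coeff_bS (n : ℕ) : coeff n bS = (-(1/2) : ℚ)^n / n.factorial := by
  simp [bS, coeff_rescale, coeff_exp, mul_div_assoc, div_eq_mul_inv]

lemma L1 : (X : ℚ⟦X⟧) * shSeries = aS - bS := by
  ext n
  rw [map_sub, coeff_aS, coeff_bS]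
  cases n with
  | zero => simp
  | succ m =>
    rw [coeff_succ_X_mul]
    simp only [shSeries, coeff_mk]
    rcases Nat.even_or_odd m with he | ho
    · obtain ⟨k, rfl⟩ := he
      rw [if_pos (by exact ⟨k, rfl⟩)]
      have hodd : Odd (k + k + 1) := ⟨k, by ring⟩
      rw [hodd.neg_pow]
      have h2 : (k + k) / 2 = k := by omega
      rw [h2]
      have : (4 : ℚ)^k = 2^(k+k) := by
        rw [show (4:ℚ) = 2^2 by norm_num, ← pow_mul]; ring_nf
      rw [this]
      have hf : ((k + k + 1).factorial : ℚ) ≠ 0 := by positivity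
      field_simp
      ring_nf
      rw [← mul_pow]; norm_num
    · obtain ⟨k, rfl⟩ := ho
      rw [if_neg (by simp [Nat.even_add_one, parity_simps])]
      have hev : Even (2 * k + 1 + 1) := ⟨k + 1, by ring⟩
      rw [hev.neg_pow]
      ring

lemma bern_odd_zero {n : ℕ} (h : Odd n) (h1 : 1 < n) : bernoulli n = 0 := by
  rw [bernoulli_eq_bernoulli'_of_ne_one (by omega), bernoulli'_eq_zero_of_odd h h1]

lemma L2 : (X : ℚ⟦X⟧) * (d⁄dX ℚ) logShSeries
    = bernoulliPowerSeries ℚ - 1 + C (1/2) * X := by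
  ext n
  rw [map_add, map_sub, coeff_C_mul, coeff_X]
  simp only [bernoulliPowerSeries, coeff_mk, Algebra.algebraMap_self, RingHom.id_apply]
  cases n with
  | zero => simp [bernoulli_zero]
  | succ m =>
    rw [coeff_succ_X_mul, coeff_derivative]
    simp only [logShSeries, coeff_mk, coeff_one]
    rcases Nat.even_or_odd (m + 1) with he | ho
    · rw [if_pos ⟨he, by omega⟩]
      have hne : ((m : ℚ) + 1) ≠ 0 := by positivity
      have hne2 : ((m + 1).factorial : ℚ) ≠ 0 := by positivity
      have h1 : m + 1 ≠ 1 := by rintro h; rw [h] at he; exact (Nat.not_even_iff.mpr rfl) he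
      rw [if_neg (by omega), if_neg h1]
      push_cast
      field_simp
      ring
    · rw [if_neg (by simp [Nat.not_even_iff_odd, ho])]
      rcases Nat.eq_or_lt_of_le (Nat.one_le_iff_ne_zero.mpr (Nat.succ_ne_zero m)) with h1 | h1
      · have hm : m = 0 := by omega
        subst hm
        norm_num [bernoulli_one]
      · rw [if_neg (by omega), if_neg (by omega), bern_odd_zero ho h1]
        norm_num

lemma L3 : (X : ℚ⟦X⟧) * (d⁄dX ℚ) shSeries + shSeries = C (1/2) * (aS + bS) := by
  ext n
  rw [map_add, coeff_C_mul, map_add, coeff_aS, coeff_bS]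
  cases n with
  | zero =>
    simp [shSeries]
    norm_num
  | succ m =>
    rw [coeff_succ_X_mul, coeff_derivative]
    simp only [shSeries, coeff_mk]
    rcases Nat.even_or_odd (m + 1) with he | ho
    · obtain ⟨k, hk⟩ := he
      have hk' : m = 2 * k - 1 ∧ 1 ≤ k := by omega
      obtain ⟨hm, hk1⟩ := hk'
      rw [show m + 1 = 2 * k by omega] at *
      rw [if_pos ⟨k, by ring⟩, Even.neg_pow ⟨k, by ring⟩]
      have h2 : 2 * k / 2 = k := by omega
      rw [h2]
      have h4 : (4 : ℚ)^k = 2^(2*k) := by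
        rw [show (4:ℚ) = 2^2 by norm_num, ← pow_mul]
      rw [h4, Nat.factorial_succ]
      have hf : ((2*k).factorial : ℚ) ≠ 0 := by positivity
      have hmq : (m : ℚ) + 1 = 2 * k := by exact_mod_cast congrArg Nat.cast (show m + 1 = 2*k by omega)
      push_cast
      field_simp
      have hP : ((1:ℚ)/2)^(2*k) * 2^(2*k) = 1 := by rw [← mul_pow]; norm_num
      linear_combination 2 * hmq - (4 * (k:ℚ) + 2) * hP
    · rw [if_neg (by simp [Nat.not_even_iff_odd, ho]), Odd.neg_pow ho]
      ring

lemma L4 : (aS - bS) * bernoulliPowerSeries ℚ = X * bS := by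
  have key : aS - bS = bS * (exp ℚ - 1) := by
    rw [mul_sub, mul_one, ← aS_mul_aS, ← mul_assoc, mul_comm bS aS, aS_mul_bS, one_mul]
  rw [key, mul_assoc, mul_comm (exp ℚ - 1), bernoulliPowerSeries_mul_exp_sub_one, mul_comm]

/-- `log((e^{x/2}-e^{-x/2})/x) = Σ_{s≥1} (B_{2s}/(2s)) x^{2s}/(2s)!`, expressed by the
defining characterization of the formal logarithm: the candidate has zero constant term and
its derivative times the series equals the derivative of the series. -/
theorem log_shSeries_eq :
    PowerSeries.constantCoeff logShSeries = 0 ∧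
      shSeries * (d⁄dX ℚ) logShSeries = (d⁄dX ℚ) shSeries := by
  constructor
  · simp [logShSeries]
  · have hC : (2 : ℚ⟦X⟧) * C (1/2) = 1 := by
      rw [show (2 : ℚ⟦X⟧) = C 2 from (map_ofNat (C (R := ℚ)) 2).symm, ← map_mul]
      norm_num
    have hX : (X : ℚ⟦X⟧) ^ 2 ≠ 0 := pow_ne_zero 2 X_ne_zero
    apply mul_left_cancel₀ hX
    linear_combination (X * (d⁄dX ℚ) logShSeries + 1) * L1 + (aS - bS) * L2
      + (-(X : ℚ⟦X⟧)) * L3 + (1 : ℚ⟦X⟧) * L4 + (-(X * bS)) * hC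
end

section
/- Let C(x) = Σ_{j≥0} 4^j B_{2j} x^{2j}/(2j)! ∈ ℚ[[x]] be the power series of x/tanh(x). Then for every natural number n, the coefficient of x^n in C(x)^{n+1} equals 1 if n is even and 0 if n is odd. (This is the Hirzebruch computation ⟨𝓛(ℂP^m),[ℂP^m]⟩ = sign(ℂP^m): the coefficient of x^n in (x/tanh x)^{n+1} is the top L-genus of ℂP^n when n = 2m.) -/
open PowerSeries

/-- `C(x) = Σ_{j≥0} 4^j B_{2j} x^{2j}/(2j)!`, the power series of `x/tanh(x)`. -/
noncomputable def cothXS : PowerSeries ℚ :=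
  PowerSeries.mk fun n =>
    if Even n then (4 : ℚ) ^ (n / 2) * bernoulli n / n.factorial else 0

namespace CothAux

noncomputable def E : PowerSeries ℚ := rescale 2 (PowerSeries.exp ℚ)

lemma rescale_X (a : ℚ) : rescale a (X : ℚ⟦X⟧) = PowerSeries.C (R := ℚ) a * X := by
  ext n
  simp only [coeff_rescale, coeff_C_mul, coeff_X]
  split_ifs with h
  · subst h; simp
  · simp

lemma cothXS_eq : cothXS = rescale 2 (bernoulliPowerSeries ℚ) + X := by
  ext n
  rw [cothXS, coeff_mk, map_add, coeff_rescale, bernoulliPowerSeries, coeff_mk, coeff_X]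
  rcases Nat.even_or_odd n with he | ho
  · have hn1 : n ≠ 1 := by rintro rfl; exact (Nat.not_even_iff_odd.2 ⟨0, rfl⟩) he
    rw [if_pos he, if_neg hn1, add_zero]
    obtain ⟨k, rfl⟩ := he
    have : ((2:ℚ))^(k+k) = 4^((k+k)/2) := by
      rw [show k + k = 2*k by ring, Nat.mul_div_cancel_left _ (by norm_num), pow_mul]
      norm_num
    simp only [Algebra.algebraMap_self, RingHom.id_apply, ← this]
    ring
  · rw [if_neg (Nat.not_even_iff_odd.2 ho)]
    rcases eq_or_ne n 1 with rfl | hn1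
    · norm_num
    · rw [if_neg hn1, add_zero, bernoulli_eq_bernoulli'_of_ne_one hn1,
        bernoulli'_eq_zero_of_odd ho (Nat.one_lt_iff_ne_zero_and_ne_one.mpr ⟨ho.pos.ne', hn1⟩)]
      norm_num

lemma key1 : cothXS * (E - 1) = X * (E + 1) := by
  have h := bernoulliPowerSeries_mul_exp_sub_one ℚ
  have h2 := congrArg (rescale (2:ℚ)) h
  simp only [map_mul, map_sub, map_one, rescale_X] at h2
  have hC2 : (PowerSeries.C (R := ℚ)) 2 = (2 : ℚ⟦X⟧) := map_ofNat _ 2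
  rw [hC2] at h2
  rw [cothXS_eq]
  show (rescale 2 (bernoulliPowerSeries ℚ) + X) * (E - 1) = X * (E + 1)
  rw [E] at *
  linear_combination h2

lemma hE' : d⁄dX ℚ E = 2 * E := by
  ext n
  rw [coeff_derivative, E, coeff_rescale, coeff_exp]
  have h2E : (2 : ℚ⟦X⟧) * rescale 2 (exp ℚ) = PowerSeries.C (R := ℚ) 2 * rescale 2 (exp ℚ) := by
    rw [map_ofNat]
  rw [h2E, coeff_C_mul, coeff_rescale, coeff_exp]
  simp only [Algebra.algebraMap_self, RingHom.id_apply, Nat.factorial_succ]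
  push_cast
  have : ((n:ℚ)+1) ≠ 0 := by positivity
  field_simp
  ring

lemma hD_ne : (E - 1 : ℚ⟦X⟧) ≠ 0 := by
  intro h
  have := congrArg (coeff (R := ℚ) 1) h
  rw [map_sub, E, coeff_rescale, coeff_exp] at this
  norm_num at this

lemma hODE : cothXS ^ 2 - X ^ 2 = cothXS - X * d⁄dX ℚ cothXS := by
  have h2 := congrArg (⇑(d⁄dX ℚ)) key1
  rw [Derivation.leibniz, Derivation.leibniz, map_sub, map_add, derivative_X, hE',
    Derivation.map_one_eq_zero] at h2
  simp only [smul_eq_mul] at h2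
  apply mul_right_cancel₀ (pow_ne_zero 2 hD_ne)
  linear_combination (cothXS*(E-1) + X*(E+1) - (E-1) - 2*X*E) * key1 + (X*(E-1)) * h2

lemma rec_step (k : ℕ) :
    coeff (R := ℚ) (k+2) (cothXS ^ (k+3)) = coeff (R := ℚ) k (cothXS ^ (k+1)) := by
  set C := cothXS with hC
  set W : ℚ⟦X⟧ := X ^ (k+2) * C ^ (k+2) with hW
  have key : PowerSeries.C (R := ℚ) ((k:ℚ)+2) * (X^(k+2) * C^(k+3) - X^(k+4) * C^(k+1))
      = PowerSeries.C (R := ℚ) (2*((k:ℚ)+2)) * W - X * d⁄dX ℚ W := by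
    rw [hW, Derivation.leibniz, Derivation.leibniz_pow, Derivation.leibniz_pow, derivative_X]
    simp only [smul_eq_mul, nsmul_eq_mul, mul_one, Nat.add_sub_cancel]
    have hc : (PowerSeries.C (R := ℚ)) ((k:ℚ)+2) = ((k+2 : ℕ) : ℚ⟦X⟧) := by
      rw [show ((k:ℚ)+2) = ((k+2:ℕ):ℚ) by push_cast; ring, map_natCast]
    have hc2 : (PowerSeries.C (R := ℚ)) (2*((k:ℚ)+2)) = ((2*(k+2) : ℕ) : ℚ⟦X⟧) := by
      rw [show (2*((k:ℚ)+2)) = ((2*(k+2):ℕ):ℚ) by push_cast; ring, map_natCast]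
    rw [hc, hc2]
    push_cast
    linear_combination (((k:ℚ⟦X⟧)+2) * X^(k+2) * C^(k+1)) * hODE
  have hkey := congrArg (coeff (R := ℚ) ((k+2)+(k+2))) key
  have e1 : coeff (R := ℚ) ((k+2)+(k+2)) (X^(k+2) * C^(k+3)) = coeff (R := ℚ) (k+2) (C^(k+3)) :=
    coeff_X_pow_mul _ _ _
  have e2 : coeff (R := ℚ) ((k+2)+(k+2)) (X^(k+4) * C^(k+1)) = coeff (R := ℚ) k (C^(k+1)) := by
    rw [show (k+2)+(k+2) = k + (k+4) by ring]
    exact coeff_X_pow_mul _ _ _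
  have e3 : coeff (R := ℚ) ((k+2)+(k+2)) (X * d⁄dX ℚ W) = coeff (R := ℚ) ((k+2)+(k+2)) W * (2*(k:ℚ)+4) := by
    rw [show (k+2)+(k+2) = (2*k+3)+1 by ring, coeff_succ_X_mul, coeff_derivative]
    push_cast; ring
  simp only [map_sub, coeff_C_mul] at hkey
  rw [e1, e2, e3] at hkey
  have hq : ((k:ℚ)+2) ≠ 0 := by positivity
  have h0 : ((k:ℚ)+2) * ((coeff (R := ℚ) (k+2)) (C^(k+3)) - (coeff (R := ℚ) k) (C^(k+1))) = 0 := by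
    linear_combination hkey
  have := (mul_eq_zero.mp h0).resolve_left hq
  linarith

end CothAux

/-- The coefficient of `x^n` in `(x/tanh x)^{n+1}` is `1` if `n` is even and `0` if `n` is
odd (Hirzebruch: the top `L`-genus of `ℂP^{n/2}` equals its signature). -/
theorem coeff_cothXS_pow :
    ∀ n : ℕ, PowerSeries.coeff (R := ℚ) n (cothXS ^ (n + 1)) = if Even n then 1 else 0 := by
  intro n
  induction n using Nat.twoStepInduction with
  | zero =>
    rw [pow_one, if_pos (Even.zero)]
    simp [cothXS, coeff_mk]
  | one =>
    rw [if_neg (by simp : ¬ Even 1), show (1+1) = 2 by rfl, sq, coeff_mul]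
    simp [cothXS, coeff_mk, Finset.Nat.antidiagonal_succ]
  | more k ih _ =>
    rw [show k+2+1 = k+3 by ring, CothAux.rec_step k, ih]
    simp [Nat.even_add_one, not_not]
end

section
/- In ℚ[[x]], log(x/tanh(x)) = Σ_{j≥1} 2^{2j}(2^{2j-1}-1)·(B_{2j}/j)·x^{2j}/(2j)!, where x/tanh(x) denotes the power series C(x) = Σ_{j≥0} 4^j B_{2j} x^{2j}/(2j)! (characterized by x·cosh x = sinh x · C(x)) and B_{2j} is the 2j-th Bernoulli number. Equivalently, x·C'(x)/C(x) = Σ_{j≥1} 2^{2j+1}(2^{2j-1}-1) B_{2j} x^{2j}/(2j)!. -/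
open PowerSeries

/-- `Σ_{j≥1} 2^{2j+1}(2^{2j-1}-1) B_{2j} x^{2j}/(2j)!`: the coefficient of `x^n` for even
`n ≠ 0` is `2^{n+1}(2^{n-1}-1) B_n / n!`. -/
noncomputable def logDerivLS : PowerSeries ℚ :=
  PowerSeries.mk fun n =>
    if Even n ∧ n ≠ 0 then
      (2 : ℚ) ^ (n + 1) * ((2 : ℚ) ^ (n - 1) - 1) * bernoulli n / n.factorial
    else 0

lemma cothXS_eq : cothXS = rescale (2 : ℚ) (bernoulliPowerSeries ℚ) + PowerSeries.X := by
  ext n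
  rw [cothXS, coeff_mk, map_add, coeff_rescale, bernoulliPowerSeries, coeff_mk, coeff_X]
  rcases Nat.even_or_odd n with h | h
  · obtain ⟨k, rfl⟩ := h
    have hk : ¬ (k + k = 1) := by omega
    have h4 : (4 : ℚ) ^ ((k + k) / 2) = (2 : ℚ) ^ (k + k) := by
      rw [show (k + k) / 2 = k from by omega,
        show (4 : ℚ) = 2 ^ 2 by norm_num, ← pow_mul, two_mul]
    have hev : Even (k + k) := ⟨k, rfl⟩
    simp [hk, h4, hev]
    ring
  · have hne : ¬ Even n := Nat.not_even_iff_odd.mpr h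
    rcases Nat.lt_or_ge n 2 with h2 | h2
    · interval_cases n
      · simp at hne
      · simp [hne, bernoulli_one]
        norm_num
    · have hb : bernoulli n = 0 := by
        rw [bernoulli_eq_bernoulli'_of_ne_one (by omega)]
        exact bernoulli'_eq_zero_of_odd h (by omega)
      have hn1 : ¬ (n = 1) := by omega
      simp [hne, hb, hn1]

lemma logDerivLS_eq : logDerivLS = rescale (4 : ℚ) (bernoulliPowerSeries ℚ)
    - 2 * rescale (2 : ℚ) (bernoulliPowerSeries ℚ) + 1 := by
  ext n
  rw [show ((2 : PowerSeries ℚ) * rescale (2:ℚ) (bernoulliPowerSeries ℚ)) =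
      C (2:ℚ) * rescale (2:ℚ) (bernoulliPowerSeries ℚ) by
        rw [map_ofNat]]
  rw [logDerivLS, coeff_mk, map_add, map_sub, coeff_C_mul, coeff_rescale, coeff_rescale,
    bernoulliPowerSeries, coeff_mk, coeff_one]
  simp only [Algebra.algebraMap_self, RingHom.id_apply]
  rcases eq_or_ne n 0 with rfl | hn0
  · norm_num
  rcases Nat.even_or_odd n with h | h
  · have hn2 : 2 ≤ n := by
      rcases h with ⟨k, rfl⟩; omega
    have hkey : (2 : ℚ) ^ (n + 1) * ((2:ℚ) ^ (n - 1) - 1) = 4 ^ n - 2 * 2 ^ n := by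
      have : (2 : ℚ) ^ (n + 1) * (2:ℚ) ^ (n - 1) = 4 ^ n := by
        rw [← pow_add, show n + 1 + (n - 1) = 2 * n by omega,
          show (4 : ℚ) = 2 ^ 2 by norm_num, ← pow_mul]
      rw [mul_sub, this]
      ring
    simp only [h, hn0, ne_eq, not_false_iff, and_self, if_true, hkey, if_false]
    ring
  · have hne : ¬ Even n := Nat.not_even_iff_odd.mpr h
    rcases Nat.lt_or_ge n 2 with h2 | h2
    · interval_cases n
      · simp at hne
      · simp [hne, bernoulli_one]
        norm_num
    · have hb : bernoulli n = 0 := by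
        rw [bernoulli_eq_bernoulli'_of_ne_one (by omega)]
        exact bernoulli'_eq_zero_of_odd h (by omega)
      simp [hne, hb, hn0]

lemma derivative_rescale_two_exp :
    (d⁄dX ℚ) (rescale (2:ℚ) (exp ℚ)) = 2 * rescale (2:ℚ) (exp ℚ) := by
  ext n
  rw [show ((2 : PowerSeries ℚ) * rescale (2:ℚ) (exp ℚ)) =
      C (2:ℚ) * rescale (2:ℚ) (exp ℚ) by rw [map_ofNat],
    coeff_derivative, coeff_C_mul, coeff_rescale, coeff_rescale, coeff_exp, coeff_exp]
  simp only [Algebra.algebraMap_self, RingHom.id_apply]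
  rw [Nat.factorial_succ]
  have h1 : ((n + 1 : ℕ) : ℚ) ≠ 0 := by positivity
  have h2 : ((n.factorial : ℚ)) ≠ 0 := by
    exact_mod_cast Nat.cast_ne_zero.mpr n.factorial_ne_zero
  field_simp
  push_cast
  ring

/-- `log(x/tanh x) = Σ_{j≥1} 2^{2j}(2^{2j-1}-1)(B_{2j}/j) x^{2j}/(2j)!`, stated in the
equivalent logarithmic-derivative form `x·C'(x) = C(x) · Σ_{j≥1} 2^{2j+1}(2^{2j-1}-1) B_{2j}
x^{2j}/(2j)!`. -/
theorem log_cothXS :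
    (PowerSeries.X : PowerSeries ℚ) * (d⁄dX ℚ) cothXS = cothXS * logDerivLS := by
  set E : PowerSeries ℚ := rescale (2:ℚ) (exp ℚ) with hE
  have hB2 : rescale (2:ℚ) (bernoulliPowerSeries ℚ) * (E - 1) = 2 * X := by
    rw [hE, show (1 : PowerSeries ℚ) = rescale (2:ℚ) 1 by rw [map_one], ← map_sub, ← map_mul,
      bernoulliPowerSeries_mul_exp_sub_one, rescale_X, map_ofNat]
  have hB4 : rescale (4:ℚ) (bernoulliPowerSeries ℚ) * ((E - 1) * (E + 1)) = 4 * X := by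
    have hEE : (E - 1) * (E + 1) = rescale ((2:ℚ)+2) (exp ℚ) - 1 := by
      rw [← exp_mul_exp_eq_exp_add (2:ℚ) 2, hE]; ring
    rw [hEE, show ((2:ℚ)+2) = 4 by norm_num,
      show (1 : PowerSeries ℚ) = rescale (4:ℚ) 1 by rw [map_one], ← map_sub, ← map_mul,
      bernoulliPowerSeries_mul_exp_sub_one, rescale_X, map_ofNat]
  have h1 : cothXS * (E - 1) = X * (E + 1) := by
    rw [cothXS_eq]; linear_combination hB2
  have hd : (d⁄dX ℚ) cothXS * (E - 1) + cothXS * (2 * E) = (E + 1) + X * (2 * E) := by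
    have hdE : (d⁄dX ℚ) E = 2 * E := by rw [hE]; exact derivative_rescale_two_exp
    have h := congrArg (d⁄dX ℚ) h1
    simp only [Derivation.leibniz, smul_eq_mul, map_sub, map_add, Derivation.map_one_eq_zero,
      derivative_X, hdE] at h
    linear_combination h
  have hM : E - 1 ≠ 0 := by
    intro h
    have := congrArg (coeff (R := ℚ) 1) h
    simp [hE, coeff_rescale, coeff_exp] at this
  have hP : E + 1 ≠ 0 := by
    intro h
    have := congrArg (coeff (R := ℚ) 1) h
    simp [hE, coeff_rescale, coeff_exp] at this
  apply mul_right_cancel₀ (mul_ne_zero hM (mul_ne_zero hM hP))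
  rw [logDerivLS_eq]
  linear_combination (X*(E-1)*(E+1)) * hd - (cothXS*(E-1)) * hB4
    + (2*cothXS*(E-1)*(E+1)) * hB2
    + (-2*X*E*(E+1) - 4*X + 4*X*(E+1) - (E-1)*(E+1)) * h1
end

section
/- Let F : ℤ³ → ℤ³ be the linear map F(m_1, m_2, m_3) = (-2m_1, 44m_1 + 28m_2, -662m_1 - 632m_2 - 992m_3). Then the image of F equals the set of triples (σ_1, σ_3, σ_5) ∈ ℤ³ such that 2 ∣ σ_1, 28 ∣ (σ_3 + 22σ_1), and 6944 ∣ (7σ_5 + 158σ_3 + 1159σ_1). -/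
/-- The image of `F(m₁,m₂,m₃) = (-2m₁, 44m₁+28m₂, -662m₁-632m₂-992m₃)` consists exactly of
the triples `(σ₁,σ₃,σ₅)` with `2 ∣ σ₁`, `28 ∣ σ₃ + 22σ₁`, and
`6944 ∣ 7σ₅ + 158σ₃ + 1159σ₁`. -/
theorem image_forgetful_CP6_D2 :
    ∀ s1 s3 s5 : ℤ,
      (∃ m1 m2 m3 : ℤ,
          s1 = -2 * m1 ∧ s3 = 44 * m1 + 28 * m2 ∧
          s5 = -662 * m1 - 632 * m2 - 992 * m3) ↔
      (2 ∣ s1 ∧ 28 ∣ (s3 + 22 * s1) ∧ 6944 ∣ (7 * s5 + 158 * s3 + 1159 * s1)) := by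
  intro s1 s3 s5
  constructor
  · rintro ⟨m1, m2, m3, rfl, rfl, rfl⟩
    exact ⟨⟨-m1, by ring⟩, ⟨m2, by ring⟩, ⟨-m3, by ring⟩⟩
  · rintro ⟨⟨a, rfl⟩, ⟨b, hb⟩, ⟨c, hc⟩⟩
    obtain rfl : s3 = 28 * b - 44 * a := by linarith
    -- `6944 = 7 * 992`, and the factor `7` cancels once `σ₁, σ₃` are solved for.
    have hs5 : 7 * s5 = 7 * (662 * a - 632 * b + 992 * c) := by linarith
    obtain rfl := mul_left_cancel₀ (by norm_num : (7 : ℤ) ≠ 0) hs5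
    exact ⟨-a, b, -c, by ring, by ring, by ring⟩
end

section
/- Let G : ℤ³ → ℤ³ be the linear map G(m_1, m_2, m_3) = (28m_1, -752m_1 - 992m_2, 10760m_1 + 10208m_2 + 8128m_3). Then the image of G equals the set of triples (σ_1, σ_3, σ_5) ∈ ℤ³ such that 28 ∣ σ_1, 6944 ∣ (7σ_3 + 188σ_1), and 1763776 ∣ (217σ_5 + 2233σ_3 - 23418σ_1). -/
/-! `G` is lower triangular, so its image is cut out row by row. After substituting the earlier
rows, the second and third conditions become `7 * 992 ∣ 7 * (σ₃ + 752 m₁)` and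
`217 * 8128 ∣ 217 * (σ₅ - 10760 m₁ - 10208 m₂)`; cancelling `7` and `217` leaves exactly the
congruences that let one solve for `m₂` and `m₃`. -/

lemma dvd_6944_iff (m1 s3 : ℤ) :
    6944 ∣ 7 * s3 + 188 * (28 * m1) ↔ 992 ∣ s3 + 752 * m1 := by
  have h : 7 * s3 + 188 * (28 * m1) = 7 * (s3 + 752 * m1) := by ring
  rw [h, show (6944 : ℤ) = 7 * 992 by norm_num, mul_dvd_mul_iff_left (by norm_num)]

lemma dvd_1763776_iff (m1 m2 s5 : ℤ) :
    1763776 ∣ 217 * s5 + 2233 * (-752 * m1 - 992 * m2) - 23418 * (28 * m1) ↔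
      8128 ∣ s5 - 10760 * m1 - 10208 * m2 := by
  have h : 217 * s5 + 2233 * (-752 * m1 - 992 * m2) - 23418 * (28 * m1) =
      217 * (s5 - 10760 * m1 - 10208 * m2) := by ring
  rw [h, show (1763776 : ℤ) = 217 * 8128 by norm_num, mul_dvd_mul_iff_left (by norm_num)]

/-- The image of `G(m₁,m₂,m₃) = (28m₁, -752m₁-992m₂, 10760m₁+10208m₂+8128m₃)` consists
exactly of the triples `(σ₁,σ₃,σ₅)` with `28 ∣ σ₁`, `6944 ∣ 7σ₃ + 188σ₁`, and
`1763776 ∣ 217σ₅ + 2233σ₃ - 23418σ₁`. -/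
theorem image_forgetful_CP6_D6 :
    ∀ s1 s3 s5 : ℤ,
      (∃ m1 m2 m3 : ℤ,
          s1 = 28 * m1 ∧ s3 = -752 * m1 - 992 * m2 ∧
          s5 = 10760 * m1 + 10208 * m2 + 8128 * m3) ↔
      (28 ∣ s1 ∧ 6944 ∣ (7 * s3 + 188 * s1) ∧
        1763776 ∣ (217 * s5 + 2233 * s3 - 23418 * s1)) := by
  intro s1 s3 s5
  constructor
  · rintro ⟨m1, m2, m3, rfl, rfl, rfl⟩
    exact ⟨dvd_mul_right _ _, (dvd_6944_iff m1 _).2 ⟨-m2, by ring⟩,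
      (dvd_1763776_iff m1 m2 _).2 ⟨m3, by ring⟩⟩
  · rintro ⟨⟨m1, rfl⟩, h3, h5⟩
    obtain ⟨k, hk⟩ := (dvd_6944_iff m1 s3).1 h3
    obtain rfl : s3 = -752 * m1 - 992 * -k := by linarith
    obtain ⟨m3, hm3⟩ := (dvd_1763776_iff m1 (-k) s5).1 h5
    exact ⟨m1, -k, m3, rfl, rfl, by linarith⟩
end
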